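/- Let ι be a cominuscule node, so that the coefficient of α_ι in every positive root is at most 1, and set w_P := w_0^P w_0. Then w_P^{-1}(α_ι) = −θ, where θ is the highest root. -/

import Mathlib

/- A combinatorial framework for reduced crystallographic root systems with a
chosen system of simple roots, realized inside a real inner product space.
Weyl group elements are represented as plain functions `V → V` that are
compositions of simple reflections; `len` is the Coxeter length. -/

noncomputable section
open Classical
open scoped RealInnerProductSpace

namespace Pp

variable {V : Type*} [NormedAddCommGroup V] [InnerProductSpace ℝ V]

/-- The coroot pairing `⟨x, α^∨⟩ = 2⟨x,α⟩/⟨α,α⟩`. -/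
def cpr (x α : V) : ℝ := 2 * ⟪x, α⟫ / ⟪α, α⟫

/-- The reflection `s_α`, as a plain function. -/
def sref (α : V) : V → V := fun x => x - cpr x α • α

/-- `w` is a product of `n` reflections in simple roots taken from `Δ`. -/
def IsWord (Δ : Finset V) (w : V → V) (n : ℕ) : Prop :=
  ∃ l : List V, l.length = n ∧ (∀ α ∈ l, α ∈ Δ) ∧ w = (l.map sref).foldr (· ∘ ·) id

/-- The Weyl group generated by the simple reflections, as a set of functions. -/
def Weyl (Δ : Finset V) : Set (V → V) := { w | ∃ n, IsWord Δ w n }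

/-- Coxeter length with respect to the simple system `Δ`. -/
def len (Δ : Finset V) (w : V → V) : ℕ := sInf { n | IsWord Δ w n }

/-- The positive roots: roots which are nonnegative combinations of the
simple roots in `Δ`.  For a sub-system `Δ' ⊆ Δ`, `Pos Φ Δ'` is the set of
positive roots supported on `Δ'`. -/
def Pos (Φ Δ : Finset V) : Finset V :=
  Φ.filter fun β => ∃ c : V → ℝ, (∀ α ∈ Δ, 0 ≤ c α) ∧ β = ∑ α ∈ Δ, c α • α

/-- Half sum of positive roots. -/
def rho (Φ Δ : Finset V) : V := (2:ℝ)⁻¹ • ∑ β ∈ Pos Φ Δ, β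

/-- The axioms of a reduced crystallographic root system `Φ` with simple
system `Δ`. -/
structure IsRS (Φ Δ : Finset V) : Prop where
  zero_not_mem : (0:V) ∉ Φ
  neg_mem : ∀ α ∈ Φ, -α ∈ Φ
  reduced : ∀ α ∈ Φ, ∀ t : ℝ, t • α ∈ (Φ : Set V) → t = 1 ∨ t = -1
  cryst : ∀ α ∈ Φ, ∀ β ∈ Φ, ∃ k : ℤ, (k : ℝ) = cpr α β
  refl_mem : ∀ α ∈ Φ, ∀ β ∈ Φ, sref α β ∈ Φ
  simple_mem : ∀ α ∈ Δ, α ∈ Φ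
  simple_indep : LinearIndependent ℝ (fun α : Δ => (α : V))
  pos_or_neg : ∀ β ∈ Φ, β ∈ Pos Φ Δ ∨ -β ∈ Pos Φ Δ

/-- `β` is a quantum root: `ℓ(s_β) = ⟨2ρ, β^∨⟩ - 1`. -/
def IsQuantum (Φ Δ : Finset V) (β : V) : Prop :=
  (len Δ (sref β) : ℝ) = cpr ((2:ℝ) • rho Φ Δ) β - 1

/-- Minimal length coset representatives `W^P`: elements of `W` mapping the
positive roots of the parabolic (`Pos Φ ΔP`) to positive roots. -/
def MinRep (Φ Δ ΔP : Finset V) (w : V → V) : Prop :=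
  w ∈ Weyl Δ ∧ ∀ β ∈ Pos Φ ΔP, w β ∈ Pos Φ Δ

/-- `θ` is the highest root. -/
def IsHighest (Φ Δ : Finset V) (θ : V) : Prop :=
  θ ∈ Pos Φ Δ ∧ ∀ β ∈ Φ, ∃ c : V → ℝ, (∀ α ∈ Δ, 0 ≤ c α) ∧ θ - β = ∑ α ∈ Δ, c α • α

/-- All roots have the same length. -/
def SimplyLaced (Φ : Finset V) : Prop := ∀ α ∈ Φ, ∀ β ∈ Φ, ⟪α, α⟫ = ⟪β, β⟫

/-- The node `ι ∈ Δ` is minuscule: the coefficient of `α_ι^∨` in every coroot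
is at most `1`. -/
def Minuscule (Φ Δ : Finset V) (ι : V) : Prop :=
  ∀ β ∈ Φ, ∀ c : V → ℝ,
    (2 / ⟪β, β⟫) • β = ∑ α ∈ Δ, c α • ((2 / ⟪α, α⟫) • α) → c ι ≤ 1

/-- The node `ι ∈ Δ` is cominuscule: the coefficient of `α_ι` in every
positive root is at most `1`. -/
def Cominuscule (Φ Δ : Finset V) (ι : V) : Prop :=
  ∀ β ∈ Pos Φ Δ, ∀ c : V → ℝ,
    ((∀ α ∈ Δ, 0 ≤ c α) ∧ β = ∑ α ∈ Δ, c α • α) → c ι ≤ 1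

/-- `(Φ, Δ)` is the root system of type `B_n` in the standard coordinates
given by the orthonormal family `e`. -/
def TypeBData (Φ Δ : Finset V) (n : ℕ) (e : Fin n → V) : Prop :=
  Orthonormal ℝ e ∧
  (Φ : Set V) =
    ({v | ∃ i j : Fin n, i ≠ j ∧ (v = e i - e j ∨ v = e i + e j ∨ v = -(e i + e j))} ∪
     {v | ∃ i : Fin n, v = e i ∨ v = -(e i)}) ∧
  (Δ : Set V) =
    ({v | ∃ i : Fin n, ∃ h : (i : ℕ) + 1 < n, v = e i - e ⟨(i : ℕ) + 1, h⟩} ∪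
     {v | ∃ h : 0 < n, v = e ⟨n - 1, by omega⟩})

/-- `(Φ, Δ)` is the root system of type `C_n` in the standard coordinates
given by the orthonormal family `e`. -/
def TypeCData (Φ Δ : Finset V) (n : ℕ) (e : Fin n → V) : Prop :=
  Orthonormal ℝ e ∧
  (Φ : Set V) =
    ({v | ∃ i j : Fin n, i ≠ j ∧ (v = e i - e j ∨ v = e i + e j ∨ v = -(e i + e j))} ∪
     {v | ∃ i : Fin n, v = (2:ℝ) • e i ∨ v = -((2:ℝ) • e i)}) ∧
  (Δ : Set V) =
    ({v | ∃ i : Fin n, ∃ h : (i : ℕ) + 1 < n, v = e i - e ⟨(i : ℕ) + 1, h⟩} ∪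
     {v | ∃ h : 0 < n, v = (2:ℝ) • e ⟨n - 1, by omega⟩})

/-- `γ` is the distinguished (quantum) root attached to the minuscule node
`ι`: `γ = α_ι` in the simply-laced case, `γ = α_{n-1} + 2α_n = e_{n-1} + e_n`
in type `B_n` (with `ι = n`), and `γ = θ = 2e_1` in type `C_n` (with `ι = 1`). -/
def DistinguishedGamma (Φ Δ : Finset V) (ι γ : V) : Prop :=
  (SimplyLaced Φ ∧ γ = ι) ∨
  (∃ n : ℕ, ∃ _h : 2 ≤ n, ∃ e : Fin n → V, TypeBData Φ Δ n e ∧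
    ι = e ⟨n - 1, by omega⟩ ∧ γ = e ⟨n - 2, by omega⟩ + e ⟨n - 1, by omega⟩) ∨
  (∃ n : ℕ, ∃ _h : 2 ≤ n, ∃ e : Fin n → V, TypeCData Φ Δ n e ∧
    ι = e ⟨0, by omega⟩ - e ⟨1, by omega⟩ ∧ γ = (2:ℝ) • e ⟨0, by omega⟩)

/- If `w ∈ W_S` sends every positive root of `S` to a negative one, then `-w` preserves the cone
spanned by `S`, so `w` reverses the order on each class of roots modulo `span S` and sends the
highest root of a class to the lowest one. For `S = Δ` this gives `w₀ θ = -θ`. For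
`S = Δ \ {α_ι}`, the cominuscule condition puts `θ - α_ι` in `span S`; `θ` is highest in its class,
and `α_ι` is lowest, since every root of the class has `α_ι`-coefficient `1`, hence is positive.
So `w₀^P θ = α_ι`, and `w_P⁻¹ α_ι = w_P⁻¹ (w₀^P (w₀ (-θ))) = -θ`. -/

lemma cpr_add_left (x y α : V) : cpr (x + y) α = cpr x α + cpr y α := by
  simp only [cpr, inner_add_left]; ring

lemma cpr_smul_left (t : ℝ) (x α : V) : cpr (t • x) α = t * cpr x α := by
  simp only [cpr, real_inner_smul_left]; ring

def srefLinear (α : V) : V →ₗ[ℝ] V where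
  toFun := sref α
  map_add' x y := by simp only [sref, cpr_add_left, add_smul]; abel
  map_smul' t x := by simp only [sref, cpr_smul_left, mul_smul, smul_sub, RingHom.id_apply]

lemma sref_sref (α x : V) : sref α (sref α x) = x := by
  rcases eq_or_ne α 0 with rfl | hα
  · simp [sref]
  have hαα : ⟪α, α⟫ ≠ 0 := inner_self_ne_zero.mpr hα
  have hcpr : cpr (sref α x) α = -cpr x α := by
    simp only [sref, cpr, inner_sub_left, real_inner_smul_left]
    field_simp
    ring
  rw [sref, hcpr, neg_smul, sub_neg_eq_add, sref, sub_add_cancel]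

section Weyl

variable {S : Finset V}

lemma id_mem_Weyl : (id : V → V) ∈ Weyl S := ⟨0, [], rfl, by simp, rfl⟩

lemma sref_comp_mem_Weyl {α : V} (hα : α ∈ S) {w : V → V} (hw : w ∈ Weyl S) :
    sref α ∘ w ∈ Weyl S := by
  obtain ⟨n, l, rfl, hl, rfl⟩ := hw
  exact ⟨l.length + 1, α :: l, rfl, by simpa [hα] using hl, rfl⟩

lemma sref_mem_Weyl {α : V} (hα : α ∈ S) : sref α ∈ Weyl S :=
  sref_comp_mem_Weyl hα id_mem_Weyl

theorem Weyl.induction_on {P : (V → V) → Prop} (hid : P id)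
    (hsref : ∀ α ∈ S, ∀ w, P w → P (sref α ∘ w)) {w : V → V} (hw : w ∈ Weyl S) : P w := by
  obtain ⟨-, l, -, hl, rfl⟩ := hw
  induction l with
  | nil => exact hid
  | cons α l ih =>
    exact hsref α (hl α List.mem_cons_self) _ (ih fun β hβ => hl β (List.mem_cons_of_mem α hβ))

lemma Weyl.comp_mem {w₁ w₂ : V → V} (h₁ : w₁ ∈ Weyl S) (h₂ : w₂ ∈ Weyl S) :
    w₁ ∘ w₂ ∈ Weyl S :=
  Weyl.induction_on (P := fun w => w ∘ w₂ ∈ Weyl S) h₂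
    (fun _ hα _ hw => sref_comp_mem_Weyl hα hw) h₁

lemma Weyl.exists_rightInverse {w : V → V} (hw : w ∈ Weyl S) :
    ∃ w' ∈ Weyl S, w ∘ w' = id := by
  refine Weyl.induction_on (P := fun w => ∃ w' ∈ Weyl S, w ∘ w' = id)
    ⟨id, id_mem_Weyl, rfl⟩ ?_ hw
  rintro α hα w ⟨w', hw', hinv⟩
  refine ⟨w' ∘ sref α, Weyl.comp_mem hw' (sref_mem_Weyl hα), funext fun x => ?_⟩
  change sref α ((w ∘ w') (sref α x)) = x
  rw [hinv, id, sref_sref]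

lemma Weyl.exists_linearMap {w : V → V} (hw : w ∈ Weyl S) : ∃ f : V →ₗ[ℝ] V, ⇑f = w :=
  Weyl.induction_on (P := fun w => ∃ f : V →ₗ[ℝ] V, ⇑f = w) ⟨LinearMap.id, rfl⟩
    (fun α _ _ ⟨f, hf⟩ => ⟨(srefLinear α).comp f, by rw [LinearMap.coe_comp, hf]; rfl⟩) hw

lemma Weyl.apply_mem {Φ Δ : Finset V} (hRS : IsRS Φ Δ) (hS : S ⊆ Δ) {w : V → V}
    (hw : w ∈ Weyl S) {β : V} (hβ : β ∈ Φ) : w β ∈ Φ :=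
  Weyl.induction_on (P := fun w => w β ∈ Φ) hβ
    (fun α hα _ hw => hRS.refl_mem α (hRS.simple_mem α (hS hα)) _ hw) hw

lemma Weyl.apply_sub_mem_span {w : V → V} (hw : w ∈ Weyl S) (x : V) :
    w x - x ∈ Submodule.span ℝ (S : Set V) := by
  refine Weyl.induction_on (P := fun w => w x - x ∈ Submodule.span ℝ (S : Set V))
    (by simp) (fun α hα w hw => ?_) hw
  have : (sref α ∘ w) x - x = (w x - x) - cpr (w x) α • α := by
    simp only [Function.comp_apply, sref]; abel
  rw [this]
  exact sub_mem hw (Submodule.smul_mem _ _ (Submodule.subset_span hα))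

end Weyl

section Cone

variable {Φ Δ : Finset V}

lemma sum_smul_eq_sum_ite {S : Finset V} (hS : S ⊆ Δ) (c : V → ℝ) :
    ∑ α ∈ S, c α • α = ∑ α ∈ Δ, (if α ∈ S then c α else 0) • α := by
  simp only [ite_smul, zero_smul, Finset.sum_ite_mem, Finset.inter_eq_right.mpr hS]

lemma sum_update_smul_eq {ι : V} (hι : ι ∈ Δ) (c : V → ℝ) (t : ℝ) :
    ∑ α ∈ Δ, Function.update c ι t α • α = t • ι + ∑ α ∈ Δ.erase ι, c α • α := by
  rw [← Finset.add_sum_erase Δ _ hι, Function.update_self]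
  congr 1
  exact Finset.sum_congr rfl fun α hα => by rw [Function.update_of_ne (Finset.ne_of_mem_erase hα)]

lemma IsRS.coeff_eq_of_sum_eq (hRS : IsRS Φ Δ) {S T : Finset V} (hS : S ⊆ Δ) (hT : T ⊆ Δ)
    {c d : V → ℝ} (h : ∑ α ∈ S, c α • α = ∑ α ∈ T, d α • α) {α : V} (hα : α ∈ Δ) :
    (if α ∈ S then c α else 0) = if α ∈ T then d α else 0 := by
  rw [sum_smul_eq_sum_ite hS, sum_smul_eq_sum_ite hT] at h
  exact (linearIndepOn_finset_iffₛ (v := id) (s := Δ)).mp hRS.simple_indep _ _ h α hα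

def InCone (S : Finset V) (x : V) : Prop :=
  ∃ c : V → ℝ, (∀ α ∈ S, 0 ≤ c α) ∧ x = ∑ α ∈ S, c α • α

lemma mem_Pos_iff {S : Finset V} {β : V} : β ∈ Pos Φ S ↔ β ∈ Φ ∧ InCone S β :=
  Finset.mem_filter

lemma inCone_of_mem_Pos {S : Finset V} {β : V} (h : β ∈ Pos Φ S) : InCone S β :=
  (mem_Pos_iff.mp h).2

lemma simple_mem_Pos (hRS : IsRS Φ Δ) {S : Finset V} (hS : S ⊆ Δ) {α : V} (hα : α ∈ S) :
    α ∈ Pos Φ S := by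
  refine mem_Pos_iff.mpr ⟨hRS.simple_mem α (hS hα), Pi.single α 1, fun β _ => ?_, ?_⟩
  · by_cases h : β = α <;> simp [h]
  · simp [Pi.single_apply, ite_smul, hα]

namespace InCone

variable {S : Finset V}

lemma zero : InCone S 0 := ⟨0, fun _ _ => le_rfl, by simp⟩

lemma add {x y : V} (hx : InCone S x) (hy : InCone S y) : InCone S (x + y) := by
  obtain ⟨c, hc, rfl⟩ := hx
  obtain ⟨d, hd, rfl⟩ := hy
  exact ⟨c + d, fun α hα => add_nonneg (hc α hα) (hd α hα), by
    simp only [Pi.add_apply, add_smul, Finset.sum_add_distrib]⟩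

lemma smul {t : ℝ} (ht : 0 ≤ t) {x : V} (hx : InCone S x) : InCone S (t • x) := by
  obtain ⟨c, hc, rfl⟩ := hx
  exact ⟨t • c, fun α hα => mul_nonneg ht (hc α hα), by
    simp only [Finset.smul_sum, Pi.smul_apply, smul_eq_mul, mul_smul]⟩

lemma sum {ι : Type*} (s : Finset ι) {f : ι → V} (h : ∀ i ∈ s, InCone S (f i)) :
    InCone S (∑ i ∈ s, f i) :=
  Finset.sum_induction f _ (fun _ _ => add) zero h

lemma mem_span {x : V} (hx : InCone S x) : x ∈ Submodule.span ℝ (S : Set V) := by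
  obtain ⟨c, -, rfl⟩ := hx
  exact Submodule.sum_mem _ fun α hα => Submodule.smul_mem _ _ (Submodule.subset_span hα)

lemma eq_zero_of_neg (hRS : IsRS Φ Δ) (hS : S ⊆ Δ) {x : V} (hx : InCone S x)
    (hx' : InCone S (-x)) : x = 0 := by
  obtain ⟨c, hc, rfl⟩ := hx
  obtain ⟨d, hd, hcd⟩ := hx'
  rw [← Finset.sum_neg_distrib, ← Finset.sum_congr rfl fun α _ => neg_smul (c α) α] at hcd
  refine Finset.sum_eq_zero fun α hα => ?_
  have := hRS.coeff_eq_of_sum_eq hS hS hcd (hS hα)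
  simp only [hα, if_true] at this
  rw [le_antisymm (by linarith [hd α hα]) (hc α hα), zero_smul]

lemma of_mem_span (hRS : IsRS Φ Δ) (hS : S ⊆ Δ) {x : V} (hx : InCone Δ x)
    (hxS : x ∈ Submodule.span ℝ (S : Set V)) : InCone S x := by
  obtain ⟨c, hc, rfl⟩ := hx
  obtain ⟨d, -, hd⟩ := Submodule.mem_span_finset.mp hxS
  refine ⟨d, fun α hα => ?_, hd.symm⟩
  have := hRS.coeff_eq_of_sum_eq hS subset_rfl hd (hS hα)
  simp only [hα, hS hα, if_true] at this
  exact this ▸ hc α (hS hα)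

end InCone

lemma inCone_erase_sub_simple (hRS : IsRS Φ Δ) {ι x : V} (hι : ι ∈ Δ) (hx : x ∈ Φ)
    (hxι : x - ι ∈ Submodule.span ℝ (Δ.erase ι : Set V)) :
    InCone (Δ.erase ι) (x - ι) := by
  obtain ⟨d, -, hd⟩ := Submodule.mem_span_finset.mp hxι
  have hxd : x = ∑ α ∈ Δ, Function.update d ι 1 α • α := by
    rw [sum_update_smul_eq hι, hd, one_smul, add_sub_cancel]
  refine ⟨d, fun α hα => ?_, hd.symm⟩
  have hαΔ := Finset.mem_of_mem_erase hα
  rcases hRS.pos_or_neg x hx with hpos | hneg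
  · obtain ⟨c, hc, hxc⟩ := inCone_of_mem_Pos hpos
    have := hRS.coeff_eq_of_sum_eq subset_rfl subset_rfl (hxc.symm.trans hxd) hαΔ
    simp only [hαΔ, if_true, Function.update_of_ne (Finset.ne_of_mem_erase hα)] at this
    exact this ▸ hc α hαΔ
  · obtain ⟨c, hc, hxc⟩ := inCone_of_mem_Pos hneg
    rw [hxd, ← Finset.sum_neg_distrib, ← Finset.sum_congr rfl fun α _ => neg_smul _ α] at hxc
    have := hRS.coeff_eq_of_sum_eq subset_rfl subset_rfl hxc.symm hι
    simp only [hι, if_true, Function.update_self] at this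
    linarith [hc ι hι]

end Cone

section Longest

variable {Φ Δ S : Finset V}

lemma neg_apply_inCone (hRS : IsRS Φ Δ) (hS : S ⊆ Δ) (f : V →ₗ[ℝ] V)
    (hneg : ∀ β ∈ Pos Φ S, -(f β) ∈ Pos Φ S) {x : V} (hx : InCone S x) :
    InCone S (-(f x)) := by
  obtain ⟨c, hc, rfl⟩ := hx
  simp only [map_sum, map_smul, ← Finset.sum_neg_distrib, ← smul_neg]
  exact InCone.sum _ fun α hα =>
    (inCone_of_mem_Pos (hneg α (simple_mem_Pos hRS hS hα))).smul (hc α hα)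

theorem Weyl.apply_highest_eq_lowest (hRS : IsRS Φ Δ) (hS : S ⊆ Δ) {w : V → V}
    (hw : w ∈ Weyl S) (hneg : ∀ β ∈ Pos Φ S, -(w β) ∈ Pos Φ S) {x z : V}
    (hx : x ∈ Φ) (hz : z ∈ Φ) (hxz : x - z ∈ Submodule.span ℝ (S : Set V))
    (hmax : ∀ y ∈ Φ, y - x ∈ Submodule.span ℝ (S : Set V) → InCone S (x - y))
    (hmin : ∀ y ∈ Φ, y - z ∈ Submodule.span ℝ (S : Set V) → InCone S (y - z)) :
    w x = z := by
  obtain ⟨w', hw', hww'⟩ := Weyl.exists_rightInverse hw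
  obtain ⟨f, rfl⟩ := Weyl.exists_linearMap hw
  have hz' : f (w' z) = z := congrFun hww' z
  have hwx : InCone S (f x - z) := by
    refine hmin _ (Weyl.apply_mem hRS hS hw hx) ?_
    simpa using add_mem (Weyl.apply_sub_mem_span hw x) hxz
  have hw'z : InCone S (x - w' z) := by
    refine hmax _ (Weyl.apply_mem hRS hS hw' hz) ?_
    simpa using sub_mem (Weyl.apply_sub_mem_span hw' z) hxz
  have hwx' : InCone S (-(f x - z)) := by
    simpa [hz'] using neg_apply_inCone hRS hS f hneg hw'z
  exact sub_eq_zero.mp (hwx.eq_zero_of_neg hRS hS hwx')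

lemma IsHighest.mem {θ : V} (hθ : IsHighest Φ Δ θ) : θ ∈ Φ :=
  (mem_Pos_iff.mp hθ.1).1

lemma IsHighest.inCone_sub {θ β : V} (hθ : IsHighest Φ Δ θ) (hβ : β ∈ Φ) :
    InCone Δ (θ - β) :=
  hθ.2 β hβ

lemma longest_apply_highest (hRS : IsRS Φ Δ) {θ : V} (hθ : IsHighest Φ Δ θ) {w0 : V → V}
    (hw0 : w0 ∈ Weyl Δ) (hw0neg : ∀ β ∈ Pos Φ Δ, -(w0 β) ∈ Pos Φ Δ) : w0 θ = -θ := by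
  have hθΦ := hθ.mem
  have hθspan := (inCone_of_mem_Pos hθ.1).mem_span
  refine Weyl.apply_highest_eq_lowest hRS subset_rfl hw0 hw0neg hθΦ (hRS.neg_mem θ hθΦ)
    (sub_mem hθspan (neg_mem hθspan)) (fun y hy _ => hθ.inCone_sub hy) fun y hy _ => ?_
  simpa [add_comm] using hθ.inCone_sub (hRS.neg_mem y hy)

lemma IsHighest.sub_mem_span_erase {ι θ : V} (hθ : IsHighest Φ Δ θ) (hRS : IsRS Φ Δ)
    (hι : ι ∈ Δ) (hcom : Cominuscule Φ Δ ι) :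
    θ - ι ∈ Submodule.span ℝ (Δ.erase ι : Set V) := by
  obtain ⟨c, hc, hθc⟩ := inCone_of_mem_Pos hθ.1
  obtain ⟨d, hd, hθd⟩ := hθ.inCone_sub (hRS.simple_mem ι hι)
  have hθd' : θ = ∑ α ∈ Δ, Function.update d ι (d ι + 1) α • α := by
    rw [sum_update_smul_eq hι, add_smul, one_smul, add_right_comm, ← sum_update_smul_eq hι,
      Function.update_eq_self, ← hθd, sub_add_cancel]
  have hcoeff := hRS.coeff_eq_of_sum_eq subset_rfl subset_rfl (hθc.symm.trans hθd') hι
  simp only [hι, if_true, Function.update_self] at hcoeff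
  have hdι : d ι = 0 := by linarith [hd ι hι, hcom θ hθ.1 c ⟨hc, hθc⟩]
  rw [hθd, ← Finset.add_sum_erase Δ _ hι, hdι, zero_smul, zero_add]
  exact InCone.mem_span ⟨d, fun α hα => hd α (Finset.mem_of_mem_erase hα), rfl⟩

lemma longest_parabolic_apply_highest (hRS : IsRS Φ Δ) {ι θ : V} (hι : ι ∈ Δ)
    (hcom : Cominuscule Φ Δ ι) (hθ : IsHighest Φ Δ θ) {w0P : V → V}
    (hw0P : w0P ∈ Weyl (Δ.erase ι))
    (hw0Pneg : ∀ β ∈ Pos Φ (Δ.erase ι), -(w0P β) ∈ Pos Φ (Δ.erase ι)) : w0P θ = ι := by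
  refine Weyl.apply_highest_eq_lowest hRS (Δ.erase_subset ι) hw0P hw0Pneg hθ.mem
    (hRS.simple_mem ι hι) (hθ.sub_mem_span_erase hRS hι hcom) (fun y hy hyθ => ?_)
    fun y hy hyι => inCone_erase_sub_simple hRS hι hy hyι
  refine (hθ.inCone_sub hy).of_mem_span hRS (Δ.erase_subset ι) ?_
  simpa using neg_mem hyθ

end Longest

end Pp

open Pp in
/-- Lemma: for a cominuscule node `ι` and `w_P = w_0^P w_0`, one has
`w_P⁻¹(α_ι) = -θ`. -/
theorem stmt11 {V : Type*} [NormedAddCommGroup V] [InnerProductSpace ℝ V]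
    (Φ Δ : Finset V) (hRS : IsRS Φ Δ) (ι : V) (hι : ι ∈ Δ)
    (hcom : Cominuscule Φ Δ ι)
    (θ : V) (hθ : IsHighest Φ Δ θ)
    (w0 w0P wPi : V → V)
    (hw0 : w0 ∈ Weyl Δ) (hw0neg : ∀ β ∈ Pos Φ Δ, -(w0 β) ∈ Pos Φ Δ)
    (hw0P : w0P ∈ Weyl (Δ.erase ι))
    (hw0Pneg : ∀ β ∈ Pos Φ (Δ.erase ι), -(w0P β) ∈ Pos Φ (Δ.erase ι))
    (hinv : (w0P ∘ w0) ∘ wPi = id ∧ wPi ∘ (w0P ∘ w0) = id) :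
    wPi ι = -θ := by
  have hw0θ : w0 θ = -θ := longest_apply_highest hRS hθ hw0 hw0neg
  have hw0Pθ : w0P θ = ι := longest_parabolic_apply_highest hRS hι hcom hθ hw0P hw0Pneg
  obtain ⟨f, rfl⟩ := Weyl.exists_linearMap hw0
  have h := congrFun hinv.2 (-θ)
  rwa [Function.comp_apply, Function.comp_apply, map_neg, hw0θ, neg_neg, hw0Pθ] at h
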